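/- For a parameter ν ≥ 0 define q_ν(x) = √((ν²/16)(x−1)² + x), φ_ν(x) = (ν²/8)(x−1) + (ν/2)·q_ν(x), and ψ_ν(x) = ν²/8 + (ν/4)·((ν²/8)(x−1) + 1)/q_ν(x), and set f(x) = x·ψ_ν(x)/(1 + φ_ν(x)). Let σ_1, σ_2 > 0 and let s_1 = [1/(1 + σ_2/σ_1) + f(σ_1/σ_2)] / [1 + f(σ_2/σ_1) + f(σ_1/σ_2)] and s_2 = 1 − s_1. Then s_1/s_2 = σ_1/σ_2. (In a two-player tournament, the Alternative model's maximum-likelihood score ratio equals the strength-parameter ratio, for every value of ν.) -/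

import Mathlib

noncomputable def q (ν x : ℝ) : ℝ := Real.sqrt ((ν ^ 2 / 16) * (x - 1) ^ 2 + x)

noncomputable def φ (ν x : ℝ) : ℝ := (ν ^ 2 / 8) * (x - 1) + (ν / 2) * q ν x

noncomputable def ψ (ν x : ℝ) : ℝ :=
  ν ^ 2 / 8 + (ν / 4) * ((ν ^ 2 / 8) * (x - 1) + 1) / q ν x

noncomputable def f (ν x : ℝ) : ℝ := x * ψ ν x / (1 + φ ν x)

lemma q_pos (ν : ℝ) {x : ℝ} (hx : 0 < x) : 0 < q ν x := by
  apply Real.sqrt_pos.mpr; positivity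

lemma q_sq (ν : ℝ) {x : ℝ} (hx : 0 < x) : q ν x ^ 2 = (ν ^ 2 / 16) * (x - 1) ^ 2 + x :=
  Real.sq_sqrt (by positivity)

lemma q_inv (ν : ℝ) {x : ℝ} (hx : 0 < x) : q ν x⁻¹ = q ν x / x := by
  rw [q, show (ν ^ 2 / 16) * (x⁻¹ - 1) ^ 2 + x⁻¹ = ((ν ^ 2 / 16) * (x - 1) ^ 2 + x) / x ^ 2 by
    field_simp; ring]
  rw [show ((ν ^ 2 / 16) * (x - 1) ^ 2 + x) = q ν x ^ 2 from (q_sq ν hx).symm,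
    show q ν x ^ 2 / x ^ 2 = (q ν x / x) ^ 2 by ring,
    Real.sqrt_sq (div_nonneg (q_pos ν hx).le hx.le)]

lemma phi_nonneg {ν : ℝ} (hν : 0 ≤ ν) {x : ℝ} (hx : 0 < x) : 0 ≤ φ ν x := by
  have hq := q_pos ν hx
  have hq2 := q_sq ν hx
  rw [φ]
  nlinarith [sq_nonneg (ν / 2 * q ν x + ν ^ 2 / 8 * (x - 1)), mul_nonneg hν hq.le,
    sq_nonneg ν, mul_pos hx (mul_pos hx hx)]

lemma psi_nonneg {ν : ℝ} (hν : 0 ≤ ν) {x : ℝ} (hx : 0 < x) : 0 ≤ ψ ν x := by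
  have hq := q_pos ν hx
  have hq2 := q_sq ν hx
  have h : ψ ν x = (ν ^ 2 / 8 * q ν x + ν / 4 * ((ν ^ 2 / 8) * (x - 1) + 1)) / q ν x := by
    rw [ψ]; field_simp
  rw [h]
  apply div_nonneg _ hq.le
  rcases le_or_gt 0 ((ν ^ 2 / 8) * (x - 1) + 1) with h1 | h1
  · positivity
  · have hν2 : 8 < ν ^ 2 := by nlinarith
    have h3 : 0 ≤ ν ^ 2 / 8 * q ν x - ν / 4 * ((ν ^ 2 / 8) * (x - 1) + 1) := by
      nlinarith [mul_nonneg (show (0:ℝ) ≤ ν / 4 by positivity)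
        (show (0:ℝ) ≤ -((ν ^ 2 / 8) * (x - 1) + 1) by linarith),
        mul_nonneg (mul_nonneg hν hν) hq.le]
    have hq4 : ν ^ 4 / 64 * q ν x ^ 2 = ν ^ 4 / 64 * ((ν ^ 2 / 16) * (x - 1) ^ 2 + x) := by
      rw [hq2]
    have h4 : 0 < ν ^ 2 / 16 * (ν ^ 2 / 4 - 1) := by nlinarith
    nlinarith [h3, hq4, h4]

lemma f_nonneg {ν : ℝ} (hν : 0 ≤ ν) {x : ℝ} (hx : 0 < x) : 0 ≤ f ν x := by
  rw [f]
  exact div_nonneg (mul_nonneg hx.le (psi_nonneg hν hx)) (by linarith [phi_nonneg hν hx])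

lemma f_key {ν x : ℝ} (hν : 0 ≤ ν) (hx : 0 < x) : f ν x = x * f ν x⁻¹ := by
  have hq := q_pos ν hx
  have hD1 : (0:ℝ) < 1 + φ ν x := by linarith [phi_nonneg hν hx]
  have hD2 : (0:ℝ) < 1 + φ ν x⁻¹ := by linarith [phi_nonneg hν (inv_pos.mpr hx)]
  simp only [f]
  rw [← mul_div_assoc, div_eq_div_iff hD1.ne' hD2.ne']
  simp only [ψ, φ, q_inv ν hx]
  field_simp
  ring

/-- In a two-player tournament, the Alternative model's maximum-likelihood score
ratio equals the strength-parameter ratio, for every value of ν. -/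
theorem alternative_two_player_score_ratio (ν : ℝ) (hν : 0 ≤ ν)
    (σ₁ σ₂ : ℝ) (hσ₁ : 0 < σ₁) (hσ₂ : 0 < σ₂) (s₁ s₂ : ℝ)
    (hs₁ : s₁ = (1 / (1 + σ₂ / σ₁) + f ν (σ₁ / σ₂)) /
      (1 + f ν (σ₂ / σ₁) + f ν (σ₁ / σ₂)))
    (hs₂ : s₂ = 1 - s₁) :
    s₁ / s₂ = σ₁ / σ₂ := by
  set x := σ₁ / σ₂ with hxdef
  have hx : 0 < x := div_pos hσ₁ hσ₂
  have hinv : σ₂ / σ₁ = x⁻¹ := (inv_div σ₁ σ₂).symm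
  have hF2 : 0 ≤ f ν x⁻¹ := f_nonneg hν (inv_pos.mpr hx)
  have hkey : f ν x = x * f ν x⁻¹ := f_key hν hx
  have hxx : (0:ℝ) < 1 + x := by linarith
  have hD : (0:ℝ) < 1 + f ν x⁻¹ + f ν x := by
    have := mul_nonneg hx.le hF2
    rw [hkey]; linarith
  have h1 : 1 / (1 + σ₂ / σ₁) = x / (1 + x) := by
    rw [hinv, show 1 + x⁻¹ = (1 + x) / x by field_simp; ring, one_div_div]
  have num2pos : (0:ℝ) < 1 / (1 + x) + f ν x⁻¹ := by
    have : (0:ℝ) < 1 / (1 + x) := by positivity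
    linarith
  have hs1' : s₁ = x * ((1 / (1 + x) + f ν x⁻¹) / (1 + f ν x⁻¹ + f ν x)) := by
    rw [hs₁, h1, hinv, ← mul_div_assoc]
    congr 1
    rw [hkey]
    ring
  have hs2' : s₂ = (1 / (1 + x) + f ν x⁻¹) / (1 + f ν x⁻¹ + f ν x) := by
    have hone : 1 - x / (1 + x) = 1 / (1 + x) := by
      field_simp
      ring
    rw [hs₂, hs1', eq_div_iff hD.ne', sub_mul, one_mul, mul_assoc,
      div_mul_cancel₀ _ hD.ne', hkey]
    linear_combination hone
  have ht : (1 / (1 + x) + f ν x⁻¹) / (1 + f ν x⁻¹ + f ν x) ≠ 0 :=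
    div_ne_zero num2pos.ne' hD.ne'
  rw [hs1', hs2', mul_div_assoc, div_self ht, mul_one]
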